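/- Let p > 3 be a prime and let G = Φ₃₁(1⁶) be the group of order p⁶ with presentation on generators α, α₁, α₂, β₁, β₂, γ and relations [α₁,α] = β₁, [α₂,α] = β₂, [α₁,β₁] = γ, [α₂,β₂] = γ, αᵖ = α₁ᵖ = α₂ᵖ = β₁ᵖ = β₂ᵖ = γᵖ = 1, with every commutator of a pair of generators not listed among these relations declared trivial. Then the Bogomolov multiplier B₀(G) is trivial. -/

import Mathlib

/-!
Φ₃₁(1⁶): relations [α₁,α]=β₁, [α₂,α]=β₂, [α₁,β₁]=γ, [α₂,β₂]=γ, all pth powers trivial.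
-/

namespace Stmt8

/-- The additive group `ℚ/ℤ`. -/
abbrev QZ : Type := ℚ ⧸ AddSubgroup.zmultiples (1 : ℚ)

/-- An inhomogeneous 2-cocycle on `G` with values in `ℚ/ℤ` (trivial `G`-action). -/
def IsTwoCocycle {G : Type} [Group G] (f : G → G → QZ) : Prop :=
  ∀ g h j : G, f h j - f (g * h) j + f g (h * j) - f g h = 0

/-- An inhomogeneous 2-coboundary on `G` with values in `ℚ/ℤ` (trivial `G`-action). -/
def IsTwoCoboundary {G : Type} [Group G] (f : G → G → QZ) : Prop :=
  ∃ c : G → QZ, ∀ g h : G, f g h = c h - c (g * h) + c g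

/-- A subgroup is bicyclic if it is abelian and generated by at most two elements
(equivalently, cyclic or a direct product of two cyclic groups). -/
def IsBicyclic {G : Type} [Group G] (A : Subgroup G) : Prop :=
  (∀ x y : A, x * y = y * x) ∧ ∃ a b : G, A = Subgroup.closure {a, b}

/-- The Bogomolov multiplier `B₀(G) ⊆ H²(G, ℚ/ℤ)` is trivial, phrased at the level of
2-cocycles: every 2-cocycle whose restriction to each bicyclic subgroup is a coboundary
(i.e. whose class restricts to zero on each bicyclic subgroup) is itself a coboundary
(i.e. its class is zero). -/
def BogomolovMultiplierIsTrivial (G : Type) [Group G] : Prop :=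
  ∀ f : G → G → QZ, IsTwoCocycle f →
    (∀ A : Subgroup G, IsBicyclic A → IsTwoCoboundary (fun a b : ↥A => f ↑a ↑b)) →
    IsTwoCoboundary f

/-- The Bogomolov multiplier `B₀(G) ⊆ H²(G, ℚ/ℤ)` is nontrivial, phrased at the level of
2-cocycles. -/
def BogomolovMultiplierIsNontrivial (G : Type) [Group G] : Prop :=
  ∃ f : G → G → QZ, IsTwoCocycle f ∧
    (∀ A : Subgroup G, IsBicyclic A → IsTwoCoboundary (fun a b : ↥A => f ↑a ↑b)) ∧
    ¬ IsTwoCoboundary f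

/-- The generators. -/
inductive Gen | a | a1 | a2 | b1 | b2 | g

open FreeGroup

/-- The commutator `[x,y] = x⁻¹y⁻¹xy`. -/
def c (x y : FreeGroup Gen) : FreeGroup Gen := x⁻¹ * y⁻¹ * x * y

/-- The defining relators. -/
def rels (p : ℕ) : Set (FreeGroup Gen) :=
  { c (of .a1) (of .a) * (of Gen.b1)⁻¹,
    c (of .a2) (of .a) * (of Gen.b2)⁻¹,
    c (of .a1) (of .b1) * (of Gen.g)⁻¹,
    c (of .a2) (of .b2) * (of Gen.g)⁻¹,
    c (of .a) (of .b1),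
    c (of .a) (of .b2),
    c (of .a) (of .g),
    c (of .a1) (of .a2),
    c (of .a1) (of .b2),
    c (of .a1) (of .g),
    c (of .a2) (of .b1),
    c (of .a2) (of .g),
    c (of .b1) (of .b2),
    c (of .b1) (of .g),
    c (of .b2) (of .g),
    (of Gen.a) ^ p,
    (of Gen.a1) ^ p,
    (of Gen.a2) ^ p,
    (of Gen.b1) ^ p,
    (of Gen.b2) ^ p,
    (of Gen.g) ^ p }

/-!
If the restriction of a 2-cocycle `f` to every bicyclic subgroup is a coboundary, then `f` is
symmetric on commuting pairs, so in the central extension `ℚ/ℤ → E → G` defined by `f` any two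
lifts of commuting elements commute. Lift `α, α₁, α₂` to elements of `E` of order dividing `p`
(possible since `ℚ/ℤ` is divisible) and send `β₁, β₂, γ` to the commutators that define them.
Every relation of `G` then holds in `E`: the trivial commutators because commuting pairs lift to
commuting pairs, the `p`-th powers because `[x, y]ᵖ = 1` when `[x, y]` commutes with `y` and
`yᵖ = 1`, and `[α₂, β₂] = [α₁, β₁]` because `α₁α₂` and `β₁β₂⁻¹` commute in `G` while their
commutator in `E` is `[α₁, β₁][α₂, β₂]⁻¹`. So `E → G` splits and `f` is a coboundary.
-/

section Commutators

variable {K : Type*} [Group K]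

theorem inv_mul_inv_mul_mul_eq_one_iff {x y : K} : x⁻¹ * y⁻¹ * x * y = 1 ↔ Commute x y := by
  rw [← Commute.inv_inv_iff, ← commutatorElement_eq_one_iff_commute, commutatorElement_def,
    inv_inv, inv_inv]

theorem inv_mul_inv_mul_mul_pow_eq_one {x y : K} {n : ℕ}
    (hc : Commute (x⁻¹ * y⁻¹ * x * y) y) (hy : y ^ n = 1) : (x⁻¹ * y⁻¹ * x * y) ^ n = 1 := by
  have hconj : y⁻¹ * x * y = x * (x⁻¹ * y⁻¹ * x * y) := by group
  generalize x⁻¹ * y⁻¹ * x * y = z at hc hconj ⊢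
  have hconj_pow : ∀ m : ℕ, (y ^ m)⁻¹ * x * y ^ m = x * z ^ m := by
    intro m
    induction m with
    | zero => simp
    | succ m ih =>
      calc (y ^ (m + 1))⁻¹ * x * y ^ (m + 1) = y⁻¹ * ((y ^ m)⁻¹ * x * y ^ m) * y := by group
      _ = y⁻¹ * x * y * (y⁻¹ * z ^ m * y) := by rw [ih]; group
      _ = x * z ^ (m + 1) := by
        rw [hconj, (hc.pow_left m).symm.inv_mul_cancel, pow_succ', mul_assoc]
  simpa [hy] using hconj_pow n

theorem commute_mul_mul_inv_iff {x₁ x₂ y₁ y₂ : K} (h₁₂ : Commute x₁ y₂) (h₂₁ : Commute x₂ y₁)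
    (hx₂ : Commute (x₁⁻¹ * y₁⁻¹ * x₁ * y₁) x₂) (hy₂ : Commute (x₁⁻¹ * y₁⁻¹ * x₁ * y₁) y₂)
    (hw : Commute (x₂⁻¹ * y₂⁻¹ * x₂ * y₂) y₂) :
    Commute (x₁ * x₂) (y₁ * y₂⁻¹) ↔ x₁⁻¹ * y₁⁻¹ * x₁ * y₁ = x₂⁻¹ * y₂⁻¹ * x₂ * y₂ := by
  have hconj₁ : y₁⁻¹ * x₁ * y₁ = x₁ * (x₁⁻¹ * y₁⁻¹ * x₁ * y₁) := by group
  have hconj₂ : y₂⁻¹ * x₂ * y₂ = x₂ * (x₂⁻¹ * y₂⁻¹ * x₂ * y₂) := by group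
  generalize x₁⁻¹ * y₁⁻¹ * x₁ * y₁ = z at hx₂ hy₂ hconj₁ ⊢
  generalize x₂⁻¹ * y₂⁻¹ * x₂ * y₂ = w at hw hconj₂ ⊢
  have hconj₂' : y₂ * x₂ * y₂⁻¹ = x₂ * w⁻¹ := by
    calc y₂ * x₂ * y₂⁻¹ = y₂ * (x₂ * w) * y₂⁻¹ * (y₂ * w * y₂⁻¹)⁻¹ := by group
    _ = x₂ * w⁻¹ := by rw [← hconj₂, hw.symm.mul_inv_cancel]; group
  have hconj : (y₁ * y₂⁻¹)⁻¹ * (x₁ * x₂) * (y₁ * y₂⁻¹) = x₁ * x₂ * (z * w⁻¹) := by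
    calc (y₁ * y₂⁻¹)⁻¹ * (x₁ * x₂) * (y₁ * y₂⁻¹)
        = y₂ * (y₁⁻¹ * x₁ * y₁) * (y₁⁻¹ * x₂ * y₁) * y₂⁻¹ := by group
    _ = (y₂ * x₁ * y₂⁻¹) * (y₂ * z * y₂⁻¹) * (y₂ * x₂ * y₂⁻¹) := by
      rw [hconj₁, h₂₁.symm.inv_mul_cancel]; group
    _ = x₁ * (z * x₂) * w⁻¹ := by
      rw [h₁₂.symm.mul_inv_cancel, hy₂.symm.mul_inv_cancel, hconj₂']; group
    _ = x₁ * x₂ * (z * w⁻¹) := by rw [hx₂.eq]; group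
  rw [commute_iff_eq, ← mul_inv_eq_one (a := z), ← mul_eq_left (a := x₁ * x₂), ← hconj,
    mul_assoc (y₁ * y₂⁻¹)⁻¹, inv_mul_eq_iff_eq_mul, eq_comm]

end Commutators

def LiftsCommute {E H : Type*} [Group E] [Group H] (π : E →* H) : Prop :=
  ∀ u v : E, Commute (π u) (π v) → Commute u v

theorem QZ.exists_nsmul_eq {n : ℕ} (hn : n ≠ 0) (q : QZ) : ∃ w : QZ, n • w = q := by
  obtain ⟨r, rfl⟩ := QuotientAddGroup.mk_surjective q
  refine ⟨QuotientAddGroup.mk (r / n), ?_⟩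
  rw [← QuotientAddGroup.mk_nsmul, nsmul_eq_mul, mul_div_cancel₀ r (Nat.cast_ne_zero.2 hn)]

section Cocycles

variable {G : Type} [Group G] {f : G → G → QZ}

theorem IsTwoCocycle.add_eq_add (hf : IsTwoCocycle f) (x y w : G) :
    f x y + f (x * y) w = f y w + f x (y * w) := by
  rw [← sub_eq_zero, ← neg_eq_zero, ← hf x y w]
  abel

theorem IsTwoCocycle.apply_one_left (hf : IsTwoCocycle f) (x : G) : f 1 x = f 1 1 := by
  simpa [sub_eq_zero] using hf 1 1 x

theorem IsTwoCocycle.apply_one_right (hf : IsTwoCocycle f) (x : G) : f x 1 = f 1 1 := by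
  simpa [sub_eq_zero, eq_comm] using hf x 1 1

theorem IsTwoCoboundary.apply_comm (hf : IsTwoCoboundary f) {x y : G}
    (h : Commute x y) : f x y = f y x := by
  obtain ⟨c, hc⟩ := hf
  rw [hc, hc, h.eq]
  abel

theorem isBicyclic_closure_pair {x y : G} (h : Commute x y) :
    IsBicyclic (Subgroup.closure {x, y}) := by
  have hcomm : ∀ u ∈ ({x, y} : Set G), ∀ v ∈ ({x, y} : Set G), u * v = v * u := by
    simp only [Set.mem_insert_iff, Set.mem_singleton_iff]
    rintro u (rfl | rfl) v (rfl | rfl)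
    exacts [rfl, h.eq, h.eq.symm, rfl]
  exact ⟨(Subgroup.isMulCommutative_closure hcomm).is_comm.comm, x, y, rfl⟩

theorem apply_comm_of_forall_isBicyclic
    (hres : ∀ A : Subgroup G, IsBicyclic A → IsTwoCoboundary (fun a b : ↥A => f ↑a ↑b))
    {x y : G} (h : Commute x y) : f x y = f y x :=
  (hres _ (isBicyclic_closure_pair h)).apply_comm
    (x := ⟨x, Subgroup.subset_closure (by simp)⟩) (y := ⟨y, Subgroup.subset_closure (by simp)⟩)
    (Subtype.ext h)

@[ext]
structure CocycleExtension (hf : IsTwoCocycle f) where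
  z : QZ
  base : G

namespace CocycleExtension

variable {hf : IsTwoCocycle f}

instance : Mul (CocycleExtension hf) := ⟨fun u v => ⟨u.z + v.z + f u.base v.base, u.base * v.base⟩⟩

-- `f` need not be normalized; the cocycle identity gives `f 1 x = f x 1 = f 1 1` instead.
instance : One (CocycleExtension hf) := ⟨⟨-f 1 1, 1⟩⟩

instance : Inv (CocycleExtension hf) :=
  ⟨fun u => ⟨-u.z - f u.base⁻¹ u.base - f 1 1, u.base⁻¹⟩⟩

@[simp] theorem mul_z (u v : CocycleExtension hf) : (u * v).z = u.z + v.z + f u.base v.base := rfl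
@[simp] theorem mul_base (u v : CocycleExtension hf) : (u * v).base = u.base * v.base := rfl
@[simp] theorem one_z : (1 : CocycleExtension hf).z = -f 1 1 := rfl
@[simp] theorem one_base : (1 : CocycleExtension hf).base = 1 := rfl
@[simp] theorem inv_z (u : CocycleExtension hf) : u⁻¹.z = -u.z - f u.base⁻¹ u.base - f 1 1 := rfl
@[simp] theorem inv_base (u : CocycleExtension hf) : u⁻¹.base = u.base⁻¹ := rfl

instance : Group (CocycleExtension hf) where
  mul_assoc u v w := by
    ext
    · have := hf.add_eq_add u.base v.base w.base
      calc (u * v * w).z = u.z + v.z + w.z + (f u.base v.base + f (u.base * v.base) w.base) := by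
            simp only [mul_z, mul_base]; abel
      _ = (u * (v * w)).z := by rw [this]; simp only [mul_z, mul_base]; abel
    · exact mul_assoc _ _ _
  one_mul u := by ext <;> simp [hf.apply_one_left]
  mul_one u := by ext <;> simp [hf.apply_one_right]
  inv_mul_cancel u := by
    ext
    · simp only [mul_z, inv_z, inv_base, one_z]
      abel
    · exact inv_mul_cancel _

variable (hf) in
def proj : CocycleExtension hf →* G where
  toFun := base
  map_one' := rfl
  map_mul' _ _ := rfl

@[simp] theorem proj_apply (u : CocycleExtension hf) : proj hf u = u.base := rfl

variable (hf) in
def inc : Multiplicative QZ →* CocycleExtension hf where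
  toFun w := ⟨w.toAdd - f 1 1, 1⟩
  map_one' := by ext <;> simp
  map_mul' a b := by ext <;> simp; abel

theorem commute_inc (w : Multiplicative QZ) (u : CocycleExtension hf) : Commute (inc hf w) u := by
  ext <;> simp [inc, hf.apply_one_left, hf.apply_one_right]; abel

theorem inc_eq_of_base_eq_one {u : CocycleExtension hf} (hu : u.base = 1) :
    inc hf (.ofAdd (u.z + f 1 1)) = u := by
  ext <;> simp [inc, hu]

theorem exists_proj_eq_pow_eq_one {n : ℕ} (hn : n ≠ 0) {x : G} (hx : x ^ n = 1) :
    ∃ u : CocycleExtension hf, proj hf u = x ∧ u ^ n = 1 := by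
  set u : CocycleExtension hf := ⟨0, x⟩
  have hun : inc hf (.ofAdd ((u ^ n).z + f 1 1)) = u ^ n :=
    inc_eq_of_base_eq_one (by rw [← proj_apply, _root_.map_pow]; exact hx)
  obtain ⟨w, hw⟩ := QZ.exists_nsmul_eq hn (-((u ^ n).z + f 1 1))
  refine ⟨inc hf (.ofAdd w) * u, by simp [inc, u], ?_⟩
  rw [(commute_inc _ _).mul_pow, ← hun, ← _root_.map_pow, ← _root_.map_mul, ← ofAdd_nsmul,
    ← ofAdd_add, hw, neg_add_cancel, ofAdd_zero, _root_.map_one]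

theorem liftsCommute_proj (hsymm : ∀ x y : G, Commute x y → f x y = f y x) :
    LiftsCommute (proj hf) := by
  intro u v h
  ext
  · show u.z + v.z + f u.base v.base = v.z + u.z + f v.base u.base
    rw [hsymm u.base v.base h]
    abel
  · exact h

theorem isTwoCoboundary_of_section (s : G →* CocycleExtension hf) (hs : ∀ x, proj hf (s x) = x) :
    IsTwoCoboundary f := by
  refine ⟨fun x => -(s x).z, fun x y => ?_⟩
  have h : (s (x * y)).z = (s x).z + (s y).z + f x y := by
    rw [_root_.map_mul, mul_z, ← proj_apply, hs, ← proj_apply, hs]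
  show f x y = -(s y).z - -(s (x * y)).z + -(s x).z
  rw [h]
  abel

end CocycleExtension

end Cocycles

section Presentation

variable {R : Set (FreeGroup Gen)} {x y z : Gen}

theorem commute_of_c_mem (h : c (of x) (of y) ∈ R) :
    Commute (PresentedGroup.of x : PresentedGroup R) (PresentedGroup.of y) := by
  rw [← inv_mul_inv_mul_mul_eq_one_iff]
  simpa only [c, _root_.map_mul, _root_.map_inv, ← PresentedGroup.of.eq_1] using
    PresentedGroup.one_of_mem h

theorem commutator_of_of_eq_of (h : c (of x) (of y) * (of z)⁻¹ ∈ R) :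
    (PresentedGroup.of x : PresentedGroup R)⁻¹ * (PresentedGroup.of y)⁻¹ * PresentedGroup.of x *
      PresentedGroup.of y = PresentedGroup.of z := by
  rw [← mul_inv_eq_one]
  simpa only [c, _root_.map_mul, _root_.map_inv, ← PresentedGroup.of.eq_1] using
    PresentedGroup.one_of_mem h

theorem of_pow_eq_one {n : ℕ} (h : of x ^ n ∈ R) :
    (PresentedGroup.of x : PresentedGroup R) ^ n = 1 := by
  simpa only [_root_.map_pow, ← PresentedGroup.of.eq_1] using PresentedGroup.one_of_mem h

end Presentation

section Phi31

variable {p : ℕ} {E H : Type*} [Group E] [Group H]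

def liftGen (A A₁ A₂ : E) : Gen → E
  | .a => A
  | .a1 => A₁
  | .a2 => A₂
  | .b1 => A₁⁻¹ * A⁻¹ * A₁ * A
  | .b2 => A₂⁻¹ * A⁻¹ * A₂ * A
  | .g => A₁⁻¹ * (A₁⁻¹ * A⁻¹ * A₁ * A)⁻¹ * A₁ * (A₁⁻¹ * A⁻¹ * A₁ * A)

theorem map_liftGen (φ : E →* H) (A A₁ A₂ : E) (x : Gen) :
    φ (liftGen A A₁ A₂ x) = liftGen (φ A) (φ A₁) (φ A₂) x := by
  cases x <;> simp [liftGen]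

theorem liftGen_of (x : Gen) :
    liftGen (.of .a) (.of .a1) (.of .a2) x = (PresentedGroup.of x : PresentedGroup (rels p)) := by
  have hb₁ := commutator_of_of_eq_of (R := rels p) (x := .a1) (y := .a) (z := .b1) (by simp [rels])
  cases x
  · rfl
  · rfl
  · rfl
  · exact hb₁
  · exact commutator_of_of_eq_of (by simp [rels])
  · simp only [liftGen, hb₁]
    exact commutator_of_of_eq_of (by simp [rels])

theorem commute_a1_mul_a2_b1_mul_b2_inv :
    Commute (.of .a1 * .of .a2 : PresentedGroup (rels p)) (.of .b1 * (.of .b2)⁻¹) := by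
  have hγ₁ := commutator_of_of_eq_of (R := rels p) (x := .a1) (y := .b1) (z := .g) (by simp [rels])
  have hγ₂ := commutator_of_of_eq_of (R := rels p) (x := .a2) (y := .b2) (z := .g) (by simp [rels])
  have hγb₂ : Commute (.of .g : PresentedGroup (rels p)) (.of .b2) :=
    (commute_of_c_mem (by simp [rels])).symm
  refine (commute_mul_mul_inv_iff (commute_of_c_mem (by simp [rels]))
    (commute_of_c_mem (by simp [rels])) ?_ ?_ ?_).2 (hγ₁.trans hγ₂.symm)
  · rw [hγ₁]; exact (commute_of_c_mem (by simp [rels])).symm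
  · rw [hγ₁]; exact hγb₂
  · rw [hγ₂]; exact hγb₂

end Phi31

section Splitting

variable {p : ℕ} {E : Type*} [Group E] {π : E →* PresentedGroup (rels p)} {A A₁ A₂ : E}

theorem commute_liftGen (hπ : LiftsCommute π) (hF : ∀ x, π (liftGen A A₁ A₂ x) = .of x)
    (x y : Gen) (h : c (of x) (of y) ∈ rels p) :
    Commute (liftGen A A₁ A₂ x) (liftGen A A₁ A₂ y) :=
  hπ _ _ (by rw [hF, hF]; exact commute_of_c_mem h)

theorem liftGen_pow_eq_one (hπ : LiftsCommute π) (hF : ∀ x, π (liftGen A A₁ A₂ x) = .of x)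
    (hA : A ^ p = 1) (hA₁ : A₁ ^ p = 1) (hA₂ : A₂ ^ p = 1) (x : Gen) :
    liftGen A A₁ A₂ x ^ p = 1 := by
  have hB₁ : liftGen A A₁ A₂ .b1 ^ p = 1 :=
    inv_mul_inv_mul_mul_pow_eq_one (commute_liftGen hπ hF .a .b1 (by simp [rels])).symm hA
  cases x
  exacts [hA, hA₁, hA₂, hB₁,
    inv_mul_inv_mul_mul_pow_eq_one (commute_liftGen hπ hF .a .b2 (by simp [rels])).symm hA,
    inv_mul_inv_mul_mul_pow_eq_one (commute_liftGen hπ hF .b1 .g (by simp [rels])).symm hB₁]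

theorem commutator_liftGen_a2_b2 (hπ : LiftsCommute π)
    (hF : ∀ x, π (liftGen A A₁ A₂ x) = .of x) :
    A₂⁻¹ * (liftGen A A₁ A₂ .b2)⁻¹ * A₂ * liftGen A A₁ A₂ .b2 = liftGen A A₁ A₂ .g := by
  have hcomm : Commute (A₁ * A₂) (liftGen A A₁ A₂ .b1 * (liftGen A A₁ A₂ .b2)⁻¹) := hπ _ _ (by
    simp only [_root_.map_mul, _root_.map_inv, hF .b1, hF .b2, show π A₁ = .of .a1 from hF .a1,
      show π A₂ = .of .a2 from hF .a2]
    exact commute_a1_mul_a2_b1_mul_b2_inv)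
  refine ((commute_mul_mul_inv_iff (commute_liftGen hπ hF .a1 .b2 (by simp [rels]))
    (commute_liftGen hπ hF .a2 .b1 (by simp [rels]))
    (commute_liftGen hπ hF .a2 .g (by simp [rels])).symm
    (commute_liftGen hπ hF .b2 .g (by simp [rels])).symm
    (hπ _ _ ?_)).1 hcomm).symm
  have hγ₂ := commutator_of_of_eq_of (R := rels p) (x := .a2) (y := .b2) (z := .g) (by simp [rels])
  simp only [_root_.map_mul, _root_.map_inv, hF, hγ₂]
  exact (commute_of_c_mem (by simp [rels])).symm

theorem lift_liftGen_eq_one (hπ : LiftsCommute π) (hF : ∀ x, π (liftGen A A₁ A₂ x) = .of x)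
    (hA : A ^ p = 1) (hA₁ : A₁ ^ p = 1) (hA₂ : A₂ ^ p = 1) :
    ∀ r ∈ rels p, FreeGroup.lift (liftGen A A₁ A₂) r = 1 := by
  intro r hr
  have hmem := hr
  simp only [rels, Set.mem_insert_iff, Set.mem_singleton_iff] at hr
  rcases hr with rfl | rfl | rfl | rfl | rfl | rfl | rfl | rfl | rfl | rfl | rfl | rfl | rfl | rfl |
    rfl | rfl | rfl | rfl | rfl | rfl | rfl
  any_goals
    simp only [c, _root_.map_mul, _root_.map_inv, FreeGroup.lift_apply_of]
    exact inv_mul_inv_mul_mul_eq_one_iff.2 (commute_liftGen hπ hF _ _ hmem)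
  any_goals
    rw [_root_.map_pow, FreeGroup.lift_apply_of]
    exact liftGen_pow_eq_one hπ hF hA hA₁ hA₂ _
  all_goals simp only [c, _root_.map_mul, _root_.map_inv, FreeGroup.lift_apply_of, mul_inv_eq_one]
  exacts [rfl, rfl, rfl, commutator_liftGen_a2_b2 hπ hF]

theorem exists_section_of_liftsCommute (π : E →* PresentedGroup (rels p)) (hπ : LiftsCommute π)
    (hlift : ∀ x : PresentedGroup (rels p), x ^ p = 1 → ∃ u, π u = x ∧ u ^ p = 1) :
    ∃ s : PresentedGroup (rels p) →* E, ∀ x, π (s x) = x := by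
  obtain ⟨A, hπA, hA⟩ := hlift _ (of_pow_eq_one (x := .a) (by simp [rels]))
  obtain ⟨A₁, hπA₁, hA₁⟩ := hlift _ (of_pow_eq_one (x := .a1) (by simp [rels]))
  obtain ⟨A₂, hπA₂, hA₂⟩ := hlift _ (of_pow_eq_one (x := .a2) (by simp [rels]))
  have hF : ∀ x, π (liftGen A A₁ A₂ x) = .of x := fun x => by
    rw [map_liftGen, hπA, hπA₁, hπA₂, liftGen_of]
  let s := PresentedGroup.toGroup (lift_liftGen_eq_one hπ hF hA hA₁ hA₂)
  have hs : π.comp s = MonoidHom.id _ :=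
    PresentedGroup.ext fun x => by simp [s, PresentedGroup.toGroup.of, hF]
  exact ⟨s, DFunLike.congr_fun hs⟩

end Splitting

theorem bogomolov_trivial_Phi31_general (p : ℕ) (hp : p.Prime) :
    BogomolovMultiplierIsTrivial (PresentedGroup (rels p)) := by
  intro f hf hres
  obtain ⟨s, hs⟩ := exists_section_of_liftsCommute (CocycleExtension.proj hf)
    (CocycleExtension.liftsCommute_proj fun _ _ => apply_comm_of_forall_isBicyclic hres)
    (fun _ => CocycleExtension.exists_proj_eq_pow_eq_one hp.ne_zero)
  exact CocycleExtension.isTwoCoboundary_of_section s hs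

theorem bogomolov_trivial_Phi31 (p : ℕ) (hp : p.Prime) (h3 : 3 < p)
    (hcard : Nat.card (PresentedGroup (rels p)) = p ^ 6) :
    BogomolovMultiplierIsTrivial (PresentedGroup (rels p)) :=
  bogomolov_trivial_Phi31_general p hp

end Stmt8
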